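/- Let X be a measurable space, α ∈ (0,1), and μ a probability measure on X × ℝ (the joint distribution of a feature x and a real-valued score s under the null distribution D). Let G be a collection of measurable group indicator functions g : X → {0,1}, each with μ{(x,s) : g(x) = 1} > 0, and let H be a class of measurable functions q' : X → ℝ closed under shifts from G: for every q' ∈ H, g ∈ G, and η ∈ ℝ, the function x ↦ q'(x) + η·g(x) also belongs to H. Suppose q ∈ H minimizes the expected pinball loss over H, i.e. ∫ PB_{1−α}(q(x), s) dμ(x,s) ≤ ∫ PB_{1−α}(q'(x), s) dμ(x,s) for all q' ∈ H (with these integrals finite for q and all its G-shifts), and suppose that for every g ∈ G, the distribution of s − q(x) under μ conditioned on the event {g(x) = 1} has a continuous cumulative distribution function. Then the attack A_q rejecting exactly when s ≥ q(x) has false positive rate α conditional on membership in each group: for every g ∈ G, μ({(x,s) : s ≥ q(x)} | {(x,s) : g(x) = 1}) = α. -/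

import Mathlib

open MeasureTheory Set ProbabilityTheory

/-- Pinball loss at quantile level `1 - α`. -/
noncomputable def pinball (α : ℝ) (yhat y : ℝ) : ℝ :=
  max (α * (yhat - y)) ((1 - α) * (y - yhat))

/-!
Write the pinball loss as `α (c - s) + (s - c)⁺`. Shifting the threshold by `η` on a group
changes the loss only on that group, and on it by at most `η (α - 1{s - q > η})` for `η > 0` and
`-η (1 - α - 1{s - q ≤ η})` for `η < 0`. Optimality of `q` against these shifts thus gives, under
the conditional law on the group, `P(s - q > t) ≤ α` for `t > 0` and `P(s - q ≤ t) ≤ 1 - α` for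
`t < 0`; continuity of the conditional CDF at `0` squeezes `P(q ≤ s)` to `α`.
-/

lemma pinball_eq (α c s : ℝ) : pinball α c s = α * (c - s) + max (s - c) 0 := by
  unfold pinball
  rw [max_comm (s - c), ← max_add_add_left]; congr 1 <;> ring

lemma pinball_add (α c η s : ℝ) : pinball α (c + η) s = pinball α η (s - c) := by
  simp only [pinball_eq]; ring_nf

lemma abs_pinball_sub_pinball_zero_le (α η r : ℝ) :
    |pinball α η r - pinball α 0 r| ≤ |α * η| + |η| := by
  have h := abs_max_sub_max_le_abs (r - η) r 0
  simp only [pinball_eq] at *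
  calc _ = |α * η + (max (r - η) 0 - max r 0)| := by ring_nf
    _ ≤ |α * η| + |max (r - η) 0 - max r 0| := abs_add_le _ _
    _ ≤ |α * η| + |η| := by simpa using h

lemma pinball_sub_pinball_zero_le_of_pos (α : ℝ) {t : ℝ} (ht : 0 < t) (r : ℝ) :
    pinball α t r - pinball α 0 r ≤ t * (α - (Ioi t).indicator 1 r) := by
  simp only [pinball_eq, indicator_apply, mem_Ioi, Pi.one_apply, sub_zero, zero_sub]
  split_ifs with h
  · rw [max_eq_left (by linarith), max_eq_left (by linarith)]; linarith
  · have := max_le_max_right 0 (show r - t ≤ r by linarith); linarith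

lemma pinball_sub_pinball_zero_le_of_neg (α : ℝ) {t : ℝ} (ht : t < 0) (r : ℝ) :
    pinball α t r - pinball α 0 r ≤ -t * (1 - α - (Iic t).indicator 1 r) := by
  simp only [pinball_eq, indicator_apply, mem_Iic, Pi.one_apply, sub_zero, zero_sub]
  split_ifs with h
  · rw [max_eq_right (by linarith), max_eq_right (by linarith)]; linarith
  · have : max (r - t) 0 ≤ max r 0 - t :=
      max_le (by linarith [le_max_left r 0]) (by linarith [le_max_right r 0])
    linarith

section

variable {Ω : Type*} [MeasurableSpace Ω]

lemma integral_cond_nonneg_of_eqOn {μ : Measure Ω} {A : Set Ω} (hA : MeasurableSet A)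
    {f d : Ω → ℝ} (hfd : EqOn f d A) (hd : ∀ ω ∉ A, d ω = 0) (h : 0 ≤ ∫ ω, d ω ∂μ) :
    0 ≤ ∫ ω, f ω ∂μ[|A] := by
  rw [ProbabilityTheory.cond, integral_smul_measure, setIntegral_congr_fun hA hfd,
    setIntegral_eq_integral_of_forall_compl_eq_zero hd]
  exact smul_nonneg ENNReal.toReal_nonneg h

lemma measureReal_le_of_integral_nonneg {ν : Measure Ω} [IsProbabilityMeasure ν] {f : Ω → ℝ}
    {B : Set Ω} {a δ : ℝ} (hB : MeasurableSet B) (hδ : 0 < δ) (hf : Integrable f ν)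
    (hle : ∀ ω, f ω ≤ δ * (a - B.indicator 1 ω)) (h : 0 ≤ ∫ ω, f ω ∂ν) : ν.real B ≤ a := by
  have hB1 : Integrable (B.indicator (1 : Ω → ℝ)) ν := (integrable_const 1).indicator hB
  have hbound : ∫ ω, f ω ∂ν ≤ δ * (a - ν.real B) :=
    calc ∫ ω, f ω ∂ν ≤ ∫ ω, δ * (a - B.indicator 1 ω) ∂ν :=
          integral_mono hf (((integrable_const a).sub hB1).const_mul δ) hle
      _ = δ * (a - ν.real B) := by
          rw [integral_const_mul, integral_sub (integrable_const a) hB1, integral_indicator_one hB,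
            integral_const, probReal_univ, one_smul]
  nlinarith

variable {ν : Measure Ω} [IsProbabilityMeasure ν] {R : Ω → ℝ} {α : ℝ}

lemma integrable_pinball_sub_pinball_zero (hR : Measurable R) (η : ℝ) :
    Integrable (fun ω => pinball α η (R ω) - pinball α 0 (R ω)) ν := by
  refine Integrable.of_bound ?_ (|α * η| + |η|)
    (Filter.Eventually.of_forall fun ω => abs_pinball_sub_pinball_zero_le α η (R ω))
  simp only [pinball]
  fun_prop

lemma measureReal_lt_le_of_pinball_optimal (hR : Measurable R)
    (hopt : ∀ η, 0 ≤ ∫ ω, (pinball α η (R ω) - pinball α 0 (R ω)) ∂ν) {t : ℝ} (ht : 0 < t) :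
    ν.real {ω | t < R ω} ≤ α :=
  measureReal_le_of_integral_nonneg (measurableSet_lt measurable_const hR) ht
    (integrable_pinball_sub_pinball_zero hR t)
    (fun ω => pinball_sub_pinball_zero_le_of_pos α ht (R ω))
    (hopt t)

lemma measureReal_le_le_of_pinball_optimal (hR : Measurable R)
    (hopt : ∀ η, 0 ≤ ∫ ω, (pinball α η (R ω) - pinball α 0 (R ω)) ∂ν) {t : ℝ} (ht : t < 0) :
    ν.real {ω | R ω ≤ t} ≤ 1 - α :=
  measureReal_le_of_integral_nonneg (measurableSet_le hR measurable_const) (neg_pos.2 ht)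
    (integrable_pinball_sub_pinball_zero hR t)
    (fun ω => pinball_sub_pinball_zero_le_of_neg α ht (R ω))
    (hopt t)

open Filter Topology in
theorem measureReal_nonneg_eq_of_pinball_optimal (hR : Measurable R)
    (hopt : ∀ η, 0 ≤ ∫ ω, (pinball α η (R ω) - pinball α 0 (R ω)) ∂ν)
    (hcont : ContinuousAt (fun t => ν.real {ω | R ω ≤ t}) 0) :
    ν.real {ω | 0 ≤ R ω} = α := by
  set F := fun t => ν.real {ω | R ω ≤ t}
  have hleft : Tendsto F (𝓝[<] 0) (𝓝 (F 0)) := hcont.tendsto.mono_left nhdsWithin_le_nhds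
  have hright : Tendsto F (𝓝[>] 0) (𝓝 (F 0)) := hcont.tendsto.mono_left nhdsWithin_le_nhds
  have hF0_le : F 0 ≤ 1 - α := le_of_tendsto hleft <| eventually_nhdsWithin_of_forall
    fun t ht => measureReal_le_le_of_pinball_optimal hR hopt ht
  have hF0_ge : 1 - α ≤ F 0 := ge_of_tendsto hright <| eventually_nhdsWithin_of_forall
    fun t ht => by
      have htail := measureReal_lt_le_of_pinball_optimal hR hopt ht
      have hcompl : {ω | t < R ω} = {ω | R ω ≤ t}ᶜ := by ext; simp
      rw [hcompl, probReal_compl_eq_one_sub (measurableSet_le hR measurable_const)] at htail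
      linarith
  have hneg_ge : F 0 ≤ ν.real {ω | R ω < 0} := le_of_tendsto hleft <|
    eventually_nhdsWithin_of_forall fun t ht =>
      measureReal_mono fun ω (hω : R ω ≤ t) => hω.trans_lt ht
  have hneg_le : ν.real {ω | R ω < 0} ≤ F 0 := measureReal_mono fun ω (hω : R ω < 0) => hω.le
  have hcompl : {ω | 0 ≤ R ω} = {ω | R ω < 0}ᶜ := by ext; simp
  rw [hcompl, probReal_compl_eq_one_sub (measurableSet_lt hR measurable_const)]
  linarith

end

theorem quantile_regression_attack_group_conditional_fpr_general
    {X : Type*} [MeasurableSpace X]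
    (α : ℝ)
    (μ : Measure (X × ℝ)) [IsProbabilityMeasure μ]
    (G : Set (X → ℝ))
    (hGind : ∀ g ∈ G, ∀ x : X, g x = 0 ∨ g x = 1)
    (hGmeas : ∀ g ∈ G, Measurable g)
    (hGpos : ∀ g ∈ G, 0 < μ {p : X × ℝ | g p.1 = 1})
    (H : Set (X → ℝ))
    (hHmeas : ∀ q' ∈ H, Measurable q')
    (hHshift : ∀ q' ∈ H, ∀ g ∈ G, ∀ η : ℝ, (fun x => q' x + η * g x) ∈ H)
    (q : X → ℝ) (hq : q ∈ H)
    (hint : ∀ g ∈ G, ∀ η : ℝ,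
      Integrable (fun p : X × ℝ => pinball α (q p.1 + η * g p.1) p.2) μ)
    (hintq : Integrable (fun p : X × ℝ => pinball α (q p.1) p.2) μ)
    (hmin : ∀ q' ∈ H, ∫ p : X × ℝ, pinball α (q p.1) p.2 ∂μ
      ≤ ∫ p : X × ℝ, pinball α (q' p.1) p.2 ∂μ)
    (hcont : ∀ g ∈ G, Continuous fun t : ℝ =>
      ((μ[|{p : X × ℝ | g p.1 = 1}]) {p : X × ℝ | p.2 - q p.1 ≤ t}).toReal) :
    ∀ g ∈ G, ((μ[|{p : X × ℝ | g p.1 = 1}]) {p : X × ℝ | q p.1 ≤ p.2}).toReal = α := by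
  intro g hg
  set A := {p : X × ℝ | g p.1 = 1}
  have hA : MeasurableSet A :=
    measurableSet_eq_fun ((hGmeas g hg).comp measurable_fst) measurable_const
  have : IsProbabilityMeasure μ[|A] := cond_isProbabilityMeasure (hGpos g hg).ne'
  have hR : Measurable fun p : X × ℝ => p.2 - q p.1 :=
    measurable_snd.sub ((hHmeas q hq).comp measurable_fst)
  have hopt (η : ℝ) :
      0 ≤ ∫ p, (pinball α η (p.2 - q p.1) - pinball α 0 (p.2 - q p.1)) ∂μ[|A] := by
    refine integral_cond_nonneg_of_eqOn hA
      (d := fun p => pinball α (q p.1 + η * g p.1) p.2 - pinball α (q p.1) p.2) ?_ ?_ ?_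
    · intro p (hp : g p.1 = 1)
      beta_reduce
      rw [hp, mul_one, pinball_add, ← pinball_add α (q p.1) 0, add_zero]
    · intro p (hp : g p.1 ≠ 1)
      simp [(hGind g hg p.1).resolve_right hp]
    · rw [integral_sub (hint g hg η) hintq]
      exact sub_nonneg.2 (hmin _ (hHshift q hq g hg η))
  have := measureReal_nonneg_eq_of_pinball_optimal hR hopt (hcont g hg).continuousAt
  simpa only [sub_nonneg, measureReal_def] using this

/-- Theorem 2 of the paper, group conditional quantile consistency:
if `q` minimizes expected pinball loss at level `1-α` over a class `H` of measurable
threshold functions closed under shifts by the group indicators in `G`, and the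
conditional distribution of `s - q(x)` on each group has a continuous CDF, then the
attack rejecting exactly when `s ≥ q(x)` has false positive rate `α` conditional on
each group `g ∈ G`. -/
theorem quantile_regression_attack_group_conditional_fpr
    {X : Type*} [MeasurableSpace X]
    (α : ℝ) (hα : α ∈ Set.Ioo (0 : ℝ) 1)
    (μ : Measure (X × ℝ)) [IsProbabilityMeasure μ]
    (G : Set (X → ℝ))
    (hGind : ∀ g ∈ G, ∀ x : X, g x = 0 ∨ g x = 1)
    (hGmeas : ∀ g ∈ G, Measurable g)
    (hGpos : ∀ g ∈ G, 0 < μ {p : X × ℝ | g p.1 = 1})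
    (H : Set (X → ℝ))
    (hHmeas : ∀ q' ∈ H, Measurable q')
    (hHshift : ∀ q' ∈ H, ∀ g ∈ G, ∀ η : ℝ, (fun x => q' x + η * g x) ∈ H)
    (q : X → ℝ) (hq : q ∈ H)
    (hint : ∀ g ∈ G, ∀ η : ℝ,
      Integrable (fun p : X × ℝ => pinball α (q p.1 + η * g p.1) p.2) μ)
    (hintq : Integrable (fun p : X × ℝ => pinball α (q p.1) p.2) μ)
    (hmin : ∀ q' ∈ H, ∫ p : X × ℝ, pinball α (q p.1) p.2 ∂μ
      ≤ ∫ p : X × ℝ, pinball α (q' p.1) p.2 ∂μ)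
    (hcont : ∀ g ∈ G, Continuous fun t : ℝ =>
      ((μ[|{p : X × ℝ | g p.1 = 1}]) {p : X × ℝ | p.2 - q p.1 ≤ t}).toReal) :
    ∀ g ∈ G, ((μ[|{p : X × ℝ | g p.1 = 1}]) {p : X × ℝ | q p.1 ≤ p.2}).toReal = α :=
  quantile_regression_attack_group_conditional_fpr_general α μ G hGind hGmeas hGpos H hHmeas hHshift
    q hq hint hintq hmin hcont
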